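/- arXiv:2502.18750 — 5 statements merged into one kernel-verified Lean document; each statement's English description precedes it below -/
import Mathlib

section
/- Let y = Xβ + z with X ∈ ℝ^{n×p} a deterministic full-rank matrix with unit-norm columns, z ~ N(0, σ²I_n), and fix λ > 0. Let X̃ be a one-at-a-time knockoff matrix, β̂_λ = Σ_λ^{-1}Xᵀy, and β̃_λ = β̂_λ + diag{Σ_λ^{-1}}(X̃ − X)ᵀy. If j is a null feature (β_j = 0), then the pair (β̂_{λ,j}, β̃_{λ,j}) is exchangeable: (β̂_{λ,j}, β̃_{λ,j}) has the same joint distribution as (β̃_{λ,j}, β̂_{λ,j}). -/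
/-!
Write `u` for the `j`-th row of `Σ_λ⁻¹ Xᵀ`, `d = [Σ_λ⁻¹]_{jj}` and `a = x̃_j - x_j`, so that
`β̂_{λ,j} = ⟪u, y⟫` and `β̃_{λ,j} = ⟪v, y⟫` with `v = u + d a`. The knockoff relations give
`Xᵀ a = -s_j e_j` and `‖a‖² = 2 s_j`; hence `⟪a, Xβ⟫ = 0` for a null feature and
`⟪u, a⟫ = -d s_j`, so `‖v‖ = ‖u‖` and `⟪v, Xβ⟫ = ⟪u, Xβ⟫`. The reflection exchanging `u` and `v`
preserves the isotropic Gaussian law of `z`, so it swaps the two statistics without changing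
their joint law.
-/

open MeasureTheory ProbabilityTheory Matrix
open scoped NNReal RealInnerProductSpace

noncomputable section

/-- Ridge Gram matrix `Σ_λ = XᵀX + λ I_p`. -/
def SigL {n p : ℕ} (X : Matrix (Fin n) (Fin p) ℝ) (l : ℝ) : Matrix (Fin p) (Fin p) ℝ :=
  Xᵀ * X + l • (1 : Matrix (Fin p) (Fin p) ℝ)

/-- `D = diag{Σ_λ⁻¹}`, the diagonal matrix with entries `[Σ_λ⁻¹]_{jj}`. -/
def Dmat {n p : ℕ} (X : Matrix (Fin n) (Fin p) ℝ) (l : ℝ) : Matrix (Fin p) (Fin p) ℝ :=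
  Matrix.diagonal (fun j => (SigL X l)⁻¹ j j)

/-- Ridge estimator `β̂_λ = Σ_λ⁻¹ Xᵀ y`. -/
def betaHat {n p : ℕ} (X : Matrix (Fin n) (Fin p) ℝ) (l : ℝ) (y : Fin n → ℝ) : Fin p → ℝ :=
  ((SigL X l)⁻¹ * Xᵀ).mulVec y

/-- One-at-a-time knockoff coefficients `β̃_λ = β̂_λ + diag{Σ_λ⁻¹}(X̃ - X)ᵀ y`. -/
def betaTilde {n p : ℕ} (X Xt : Matrix (Fin n) (Fin p) ℝ) (l : ℝ) (y : Fin n → ℝ) :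
    Fin p → ℝ :=
  betaHat X l y + (Dmat X l * (Xt - X)ᵀ).mulVec y

lemma map_inner_pair_swap {E : Type*} [NormedAddCommGroup E] [InnerProductSpace ℝ E]
    [MeasurableSpace E] [BorelSpace E] (μ : Measure E)
    (hμ : ∀ f : E ≃ₗᵢ[ℝ] E, μ.map f = μ) {u v c : E} (hnorm : ‖u‖ = ‖v‖)
    (hmean : ⟪u, c⟫ = ⟪v, c⟫) :
    μ.map (fun x => (⟪u, c + x⟫, ⟪v, c + x⟫)) = μ.map (fun x => (⟪v, c + x⟫, ⟪u, c + x⟫)) := by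
  set R := Submodule.reflection (ℝ ∙ (u - v))ᗮ
  have hRu : R u = v := Submodule.reflection_sub hnorm
  have hRv : R v = u := by rw [← hRu, Submodule.reflection_reflection]
  have hadj : ∀ a x, ⟪a, R x⟫ = ⟪R a, x⟫ := fun a x => by
    rw [← R.inner_map_map, Submodule.reflection_reflection]
  have hswap : (fun x => (⟪u, c + x⟫, ⟪v, c + x⟫)) ∘ R = fun x => (⟪v, c + x⟫, ⟪u, c + x⟫) := by
    funext x
    simp only [Function.comp_apply, inner_add_right, hadj, hRu, hRv, hmean]
  rw [← hswap, ← Measure.map_map (by fun_prop) R.continuous.measurable, hμ]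

section Gaussian

variable {ι : Type*} [Fintype ι]

lemma map_toLp_pi_gaussianReal (σ2 : ℝ≥0) :
    (Measure.pi fun _ : ι => gaussianReal 0 σ2).map (WithLp.toLp 2)
      = (stdGaussian (EuclideanSpace ℝ ι)).map ((NNReal.sqrt σ2 : ℝ) • ·) := by
  set c : ℝ := (NNReal.sqrt σ2 : ℝ)
  have hscale : Measure.pi (fun _ : ι => gaussianReal 0 σ2)
      = (Measure.pi fun _ : ι => gaussianReal 0 1).map (fun x i => c * x i) := by
    rw [Measure.pi_map_pi (fun _ => (measurable_const_mul c).aemeasurable)]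
    congr 1
    funext i
    rw [gaussianReal_map_const_mul, mul_zero, mul_one]
    congr
    ext
    simp [c]
  rw [hscale, ← map_pi_eq_stdGaussian, Measure.map_map (by fun_prop) (by fun_prop),
    Measure.map_map (by fun_prop) (by fun_prop)]
  rfl

lemma map_linearIsometryEquiv_pi_gaussianReal (σ2 : ℝ≥0)
    (f : EuclideanSpace ℝ ι ≃ₗᵢ[ℝ] EuclideanSpace ℝ ι) :
    ((Measure.pi fun _ : ι => gaussianReal 0 σ2).map (WithLp.toLp 2)).map f
      = (Measure.pi fun _ : ι => gaussianReal 0 σ2).map (WithLp.toLp 2) := by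
  set c : ℝ := (NNReal.sqrt σ2 : ℝ)
  have hcomm : f ∘ (c • ·) = (c • ·) ∘ f := funext fun x => f.map_smul c x
  rw [map_toLp_pi_gaussianReal, Measure.map_map (by fun_prop) (by fun_prop), hcomm,
    ← Measure.map_map (by fun_prop) (by fun_prop), stdGaussian_map]

lemma map_toLp_eq_of_iIndepFun {Ω : Type*} [MeasurableSpace Ω] (P : Measure Ω)
    [IsProbabilityMeasure P] (σ2 : ℝ≥0) (z : Ω → ι → ℝ)
    (hzmeas : ∀ i, Measurable fun ω => z ω i)
    (hzdist : ∀ i, P.map (fun ω => z ω i) = gaussianReal 0 σ2)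
    (hzindep : iIndepFun (fun i ω => z ω i) P) :
    P.map (fun ω => WithLp.toLp 2 (z ω))
      = (Measure.pi fun _ : ι => gaussianReal 0 σ2).map (WithLp.toLp 2) := by
  have hlaw := (iIndepFun_iff_map_fun_eq_pi_map fun i => (hzmeas i).aemeasurable).1 hzindep
  simp only [hzdist] at hlaw
  rw [← hlaw, Measure.map_map (by fun_prop) (measurable_pi_iff.2 hzmeas)]
  rfl

lemma map_dotProduct_pair_swap {Ω : Type*} [MeasurableSpace Ω] (P : Measure Ω)
    [IsProbabilityMeasure P] (σ2 : ℝ≥0) (z : Ω → ι → ℝ)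
    (hzmeas : ∀ i, Measurable fun ω => z ω i)
    (hzdist : ∀ i, P.map (fun ω => z ω i) = gaussianReal 0 σ2)
    (hzindep : iIndepFun (fun i ω => z ω i) P) {u v c : ι → ℝ}
    (hnorm : u ⬝ᵥ u = v ⬝ᵥ v) (hmean : u ⬝ᵥ c = v ⬝ᵥ c) :
    P.map (fun ω => (u ⬝ᵥ (c + z ω), v ⬝ᵥ (c + z ω)))
      = P.map (fun ω => (v ⬝ᵥ (c + z ω), u ⬝ᵥ (c + z ω))) := by
  have hinner : ∀ a x : ι → ℝ, a ⬝ᵥ x = ⟪WithLp.toLp 2 a, WithLp.toLp 2 x⟫ := fun a x => by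
    rw [EuclideanSpace.inner_toLp_toLp, star_trivial, dotProduct_comm]
  have hZ : Measurable fun ω => WithLp.toLp 2 (z ω) := by
    have := measurable_pi_iff.2 hzmeas
    fun_prop
  have hnorm' : ‖WithLp.toLp 2 u‖ = ‖WithLp.toLp 2 v‖ := by
    rw [← sq_eq_sq₀ (norm_nonneg _) (norm_nonneg _), ← real_inner_self_eq_norm_sq,
      ← real_inner_self_eq_norm_sq, ← hinner, ← hinner, hnorm]
  have hexchange := map_inner_pair_swap _
    (map_linearIsometryEquiv_pi_gaussianReal σ2) hnorm' (by rwa [← hinner, ← hinner])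
  rw [← map_toLp_eq_of_iIndepFun P σ2 z hzmeas hzdist hzindep,
    Measure.map_map (by fun_prop) hZ, Measure.map_map (by fun_prop) hZ] at hexchange
  simpa only [hinner, WithLp.toLp_add, Function.comp_def] using hexchange

end Gaussian

section Knockoff

variable {n p : ℕ} {X Xt : Matrix (Fin n) (Fin p) ℝ} {s : Fin p → ℝ}

lemma sub_transpose_mul_of_knockoff (hkn : Xtᵀ * X = Xᵀ * X - diagonal s) :
    (Xt - X)ᵀ * X = -diagonal s := by
  rw [transpose_sub, Matrix.sub_mul, hkn]
  abel

lemma transpose_mul_sub_of_knockoff (hkn : Xtᵀ * X = Xᵀ * X - diagonal s) :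
    Xᵀ * (Xt - X) = -diagonal s := by
  rw [← transpose_transpose (Xᵀ * (Xt - X)), transpose_mul, transpose_transpose,
    sub_transpose_mul_of_knockoff hkn, transpose_neg, diagonal_transpose]

lemma knockoff_sub_dotProduct_mulVec_of_null (hkn : Xtᵀ * X = Xᵀ * X - diagonal s)
    {β : Fin p → ℝ} {j : Fin p} (hnull : β j = 0) : (Xt - X)ᵀ j ⬝ᵥ X *ᵥ β = 0 := by
  have hrow : (Xt - X)ᵀ j ⬝ᵥ X *ᵥ β = (((Xt - X)ᵀ * X) *ᵥ β) j := by
    rw [← mulVec_mulVec]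
    rfl
  rw [hrow, sub_transpose_mul_of_knockoff hkn, neg_mulVec, Pi.neg_apply, mulVec_diagonal,
    hnull, mul_zero, neg_zero]

lemma knockoff_sub_dotProduct_self (hcols : ∀ j, Xᵀ j ⬝ᵥ Xᵀ j = 1)
    (hkn : Xtᵀ * X = Xᵀ * X - diagonal s) (hkn' : ∀ j, Xtᵀ j ⬝ᵥ Xtᵀ j = 1) (j : Fin p) :
    (Xt - X)ᵀ j ⬝ᵥ (Xt - X)ᵀ j = 2 * s j := by
  have hcross : Xtᵀ j ⬝ᵥ Xᵀ j = 1 - s j := by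
    have hjj : (Xtᵀ * X) j j = (Xᵀ * X) j j - s j := by
      rw [hkn, Matrix.sub_apply, diagonal_apply_eq]
    rwa [show (Xᵀ * X) j j = Xᵀ j ⬝ᵥ Xᵀ j from rfl, hcols] at hjj
  rw [show (Xt - X)ᵀ j = Xtᵀ j - Xᵀ j from rfl, sub_dotProduct, dotProduct_sub, dotProduct_sub,
    hkn' j, hcols j, dotProduct_comm (Xᵀ j), hcross]
  ring

lemma mul_transpose_dotProduct_knockoff_sub (hkn : Xtᵀ * X = Xᵀ * X - diagonal s)
    (A : Matrix (Fin p) (Fin p) ℝ) (j : Fin p) :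
    (A * Xᵀ) j ⬝ᵥ (Xt - X)ᵀ j = -(A j j * s j) := by
  rw [show (A * Xᵀ) j ⬝ᵥ (Xt - X)ᵀ j = (A * Xᵀ * (Xt - X)) j j from rfl, Matrix.mul_assoc,
    transpose_mul_sub_of_knockoff hkn, Matrix.mul_neg, neg_apply, mul_diagonal]

lemma dotProduct_self_add_knockoff_sub (hcols : ∀ j, Xᵀ j ⬝ᵥ Xᵀ j = 1)
    (hkn : Xtᵀ * X = Xᵀ * X - diagonal s) (hkn' : ∀ j, Xtᵀ j ⬝ᵥ Xtᵀ j = 1)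
    (A : Matrix (Fin p) (Fin p) ℝ) (j : Fin p) :
    ((A * Xᵀ) j + A j j • (Xt - X)ᵀ j) ⬝ᵥ ((A * Xᵀ) j + A j j • (Xt - X)ᵀ j)
      = (A * Xᵀ) j ⬝ᵥ (A * Xᵀ) j := by
  simp only [add_dotProduct, dotProduct_add, smul_dotProduct, dotProduct_smul, smul_eq_mul,
    dotProduct_comm _ ((A * Xᵀ) j), mul_transpose_dotProduct_knockoff_sub hkn,
    knockoff_sub_dotProduct_self hcols hkn hkn']
  ring

end Knockoff

lemma betaTilde_apply_eq_dotProduct {n p : ℕ} (X Xt : Matrix (Fin n) (Fin p) ℝ) (l : ℝ)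
    (y : Fin n → ℝ) (j : Fin p) :
    betaTilde X Xt l y j
      = (((SigL X l)⁻¹ * Xᵀ) j + (SigL X l)⁻¹ j j • (Xt - X)ᵀ j) ⬝ᵥ y := by
  have hrow : (Dmat X l * (Xt - X)ᵀ) j = (SigL X l)⁻¹ j j • (Xt - X)ᵀ j := by
    ext i
    simp [Dmat, diagonal_mul]
  rw [add_dotProduct, ← hrow]
  rfl

theorem stmt_1_general
    {Ω : Type} [MeasurableSpace Ω] (P : Measure Ω) [IsProbabilityMeasure P]
    (n p : ℕ)
    (X : Matrix (Fin n) (Fin p) ℝ)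
    (hcols : ∀ j, Xᵀ j ⬝ᵥ Xᵀ j = 1)
    (β : Fin p → ℝ) (σ2 : ℝ≥0)
    (z : Ω → Fin n → ℝ)
    (hzmeas : ∀ i, Measurable fun ω => z ω i)
    (hzdist : ∀ i, P.map (fun ω => z ω i) = gaussianReal 0 σ2)
    (hzindep : iIndepFun (fun i ω => z ω i) P)
    (l : ℝ)
    (s : Fin p → ℝ)
    (Xt : Matrix (Fin n) (Fin p) ℝ)
    (hkn1 : Xtᵀ * X = Xᵀ * X - Matrix.diagonal s)
    (hkn2 : ∀ j, Xtᵀ j ⬝ᵥ Xtᵀ j = 1)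
    (y : Ω → Fin n → ℝ) (hy : ∀ ω, y ω = X.mulVec β + z ω)
    (j : Fin p) (hnull : β j = 0) :
    P.map (fun ω => (betaHat X l (y ω) j, betaTilde X Xt l (y ω) j))
      = P.map (fun ω => (betaTilde X Xt l (y ω) j, betaHat X l (y ω) j)) := by
  have hHat : ∀ ω, betaHat X l (y ω) j = ((SigL X l)⁻¹ * Xᵀ) j ⬝ᵥ (X *ᵥ β + z ω) :=
    fun ω => by rw [← hy]; rfl
  have hTilde : ∀ ω, betaTilde X Xt l (y ω) j
      = (((SigL X l)⁻¹ * Xᵀ) j + (SigL X l)⁻¹ j j • (Xt - X)ᵀ j) ⬝ᵥ (X *ᵥ β + z ω) :=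
    fun ω => by rw [betaTilde_apply_eq_dotProduct, hy]
  simp only [hHat, hTilde]
  refine map_dotProduct_pair_swap P σ2 z hzmeas hzdist hzindep
    (dotProduct_self_add_knockoff_sub hcols hkn1 hkn2 _ j).symm ?_
  rw [add_dotProduct, smul_dotProduct, knockoff_sub_dotProduct_mulVec_of_null hkn1 hnull,
    smul_zero, add_zero]

/-- Corollary 2.1: for a null feature `j` (i.e. `β j = 0`), the pair
`(β̂_{λ,j}, β̃_{λ,j})` is exchangeable: it has the same joint distribution as
`(β̃_{λ,j}, β̂_{λ,j})`. -/
theorem stmt_1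
    {Ω : Type} [MeasurableSpace Ω] (P : Measure Ω) [IsProbabilityMeasure P]
    (n p : ℕ) (hnp : p ≤ n)
    (X : Matrix (Fin n) (Fin p) ℝ) (hrank : X.rank = p)
    (hcols : ∀ j, Xᵀ j ⬝ᵥ Xᵀ j = 1)
    (β : Fin p → ℝ) (σ2 : ℝ≥0)
    (z : Ω → Fin n → ℝ)
    (hzmeas : ∀ i, Measurable fun ω => z ω i)
    (hzdist : ∀ i, P.map (fun ω => z ω i) = gaussianReal 0 σ2)
    (hzindep : iIndepFun (fun i ω => z ω i) P)
    (l : ℝ) (hl : 0 < l)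
    (s : Fin p → ℝ) (hs : ∀ j, 0 ≤ s j)
    (Xt : Matrix (Fin n) (Fin p) ℝ)
    (hkn1 : Xtᵀ * X = Xᵀ * X - Matrix.diagonal s)
    (hkn2 : ∀ j, Xtᵀ j ⬝ᵥ Xtᵀ j = 1)
    (y : Ω → Fin n → ℝ) (hy : ∀ ω, y ω = X.mulVec β + z ω)
    (j : Fin p) (hnull : β j = 0) :
    P.map (fun ω => (betaHat X l (y ω) j, betaTilde X Xt l (y ω) j))
      = P.map (fun ω => (betaTilde X Xt l (y ω) j, betaHat X l (y ω) j)) :=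
  stmt_1_general P n p X hcols β σ2 z hzmeas hzdist hzindep l s Xt hkn1 hkn2 y hy j hnull

end
end

section
/- Let X = [x_1,…,x_p] ∈ ℝ^{n×p} be full rank with unit-norm columns, fix j, let P_{\j} denote the orthogonal projection onto the column space of X_{\j}, and set σ_j² = ‖x_j − P_{\j}x_j‖² > 0. Then a vector x̃_j ∈ ℝ^n satisfies the one-at-a-time knockoff conditions (i) X_{\j}ᵀx̃_j = X_{\j}ᵀx_j, (ii) x_jᵀx̃_j = 1 − s_j, (iii) x̃_jᵀx̃_j = 1, for a given s_j ≥ 0, if and only if s_j ∈ [0, 2σ_j²] and x̃_j = (s_j/σ_j²)P_{\j}x_j + (1 − s_j/σ_j²)x_j + r_j, where r_j ∈ ℝ^n is any vector with Xᵀr_j = 0 and ‖r_j‖² = 2s_j − s_j²/σ_j². -/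
/-!
Write `e = x_j - P_{\j} x_j`. Since `e` is orthogonal to the other columns and to `P_{\j} x_j`,
`x_jᵀ e = eᵀ e = σ_j²`. Conditions (i) and (ii) say precisely that
`r = x̃_j - x_j + (s_j/σ_j²) e` is orthogonal to every column of `X`, hence also to `e`, and then
Pythagoras gives `‖x̃_j‖² = 1 - 2 s_j + s_j²/σ_j² + ‖r‖²`. So (iii) is the stated norm of `r`,
and `‖r‖² ≥ 0` is the bound `s_j ≤ 2σ_j²`.
-/

open Matrix

theorem dotProduct_eq_zero_of_mem_span {ι R : Type*} [Fintype ι] [CommSemiring R]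
    {S : Set (ι → R)} {w x : ι → R} (hw : w ∈ Submodule.span R S)
    (h : ∀ s ∈ S, s ⬝ᵥ x = 0) : w ⬝ᵥ x = 0 := by
  induction hw using Submodule.span_induction with
  | mem s hs => exact h s hs
  | zero => exact zero_dotProduct x
  | add a b _ _ ha hb => rw [add_dotProduct, ha, hb, add_zero]
  | smul c a _ ha => rw [smul_dotProduct, ha, smul_zero]

theorem add_dotProduct_add_of_dotProduct_eq_zero {ι R : Type*} [Fintype ι] [CommSemiring R]
    {a b : ι → R} (h : a ⬝ᵥ b = 0) : (a + b) ⬝ᵥ (a + b) = a ⬝ᵥ a + b ⬝ᵥ b := by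
  rw [add_dotProduct, dotProduct_add, dotProduct_add, dotProduct_comm b a, h]
  ring

section Knockoff

variable {ι κ : Type*} [Fintype ι] {v : κ → ι → ℝ} {j : κ} {p : ι → ℝ}

theorem dotProduct_sub_eq_sub_dotProduct_sub (hp : p ∈ Submodule.span ℝ (v '' {i | i ≠ j}))
    (horth : ∀ i, i ≠ j → v i ⬝ᵥ (v j - p) = 0) :
    v j ⬝ᵥ (v j - p) = (v j - p) ⬝ᵥ (v j - p) := by
  have hpe : p ⬝ᵥ (v j - p) = 0 :=
    dotProduct_eq_zero_of_mem_span hp (by rintro _ ⟨i, hi, rfl⟩; exact horth i hi)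
  rw [sub_dotProduct (v j), hpe, sub_zero]

theorem dotProduct_self_sub_smul_add (hp : p ∈ Submodule.span ℝ (v '' {i | i ≠ j}))
    (horth : ∀ i, i ≠ j → v i ⬝ᵥ (v j - p) = 0) (hunit : v j ⬝ᵥ v j = 1)
    (c : ℝ) (r : ι → ℝ) (hr : ∀ i, v i ⬝ᵥ r = 0) :
    (v j - c • (v j - p) + r) ⬝ᵥ (v j - c • (v j - p) + r)
      = 1 - 2 * c * ((v j - p) ⬝ᵥ (v j - p)) + c ^ 2 * ((v j - p) ⬝ᵥ (v j - p)) + r ⬝ᵥ r := by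
  have hpr : p ⬝ᵥ r = 0 :=
    dotProduct_eq_zero_of_mem_span hp (by rintro _ ⟨i, -, rfl⟩; exact hr i)
  have hre : (v j - c • (v j - p)) ⬝ᵥ r = 0 := by
    simp only [sub_dotProduct, smul_dotProduct, hr j, hpr, sub_zero, smul_zero]
  have hue := dotProduct_sub_eq_sub_dotProduct_sub hp horth
  set e := v j - p
  have heu : e ⬝ᵥ v j = e ⬝ᵥ e := dotProduct_comm e (v j) ▸ hue
  rw [add_dotProduct_add_of_dotProduct_eq_zero hre]
  simp only [sub_dotProduct, dotProduct_sub, smul_dotProduct, dotProduct_smul, smul_eq_mul,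
    hue, heu, hunit]
  ring

theorem knockoff_conditions_iff (hp : p ∈ Submodule.span ℝ (v '' {i | i ≠ j}))
    (horth : ∀ i, i ≠ j → v i ⬝ᵥ (v j - p) = 0) (hunit : v j ⬝ᵥ v j = 1)
    {σ : ℝ} (hσ : σ = (v j - p) ⬝ᵥ (v j - p)) (hσpos : 0 < σ) (s : ℝ) (x : ι → ℝ) :
    ((∀ i, i ≠ j → v i ⬝ᵥ x = v i ⬝ᵥ v j) ∧ v j ⬝ᵥ x = 1 - s ∧ x ⬝ᵥ x = 1)
      ↔ (s ≤ 2 * σ ∧ ∃ r : ι → ℝ, (∀ i, v i ⬝ᵥ r = 0) ∧ r ⬝ᵥ r = 2 * s - s ^ 2 / σ ∧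
          x = v j - (s / σ) • (v j - p) + r) := by
  have hue : v j ⬝ᵥ (v j - p) = σ := hσ ▸ dotProduct_sub_eq_sub_dotProduct_sub hp horth
  have hnorm := dotProduct_self_sub_smul_add hp horth hunit (s / σ)
  rw [← hσ] at hnorm
  constructor
  · rintro ⟨hothers, hj, hx⟩
    set r := x - v j + (s / σ) • (v j - p) with hr_def
    have hr : ∀ i, v i ⬝ᵥ r = 0 := by
      intro i
      rcases eq_or_ne i j with rfl | hi
      · simp only [r, dotProduct_add, dotProduct_sub, dotProduct_smul, smul_eq_mul, hj, hunit,
          hue]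
        field_simp
        ring
      · simp only [r, dotProduct_add, dotProduct_sub, dotProduct_smul, smul_eq_mul, hothers i hi,
          horth i hi]
        ring
    have hxr : x = v j - (s / σ) • (v j - p) + r := by
      rw [hr_def]
      abel
    have hrr : r ⬝ᵥ r = 2 * s - s ^ 2 / σ := by
      have := hnorm r hr
      rw [← hxr, hx] at this
      field_simp at this ⊢
      linarith
    have hrr_nonneg : 0 ≤ r ⬝ᵥ r := Finset.sum_nonneg fun i _ => mul_self_nonneg (r i)
    refine ⟨?_, r, hr, hrr, hxr⟩
    rw [hrr, sub_nonneg, div_le_iff₀ hσpos] at hrr_nonneg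
    -- `s (2σ - s) ≥ 0` with `σ > 0` forces `0 ≤ s ≤ 2σ`
    nlinarith
  · rintro ⟨-, r, hr, hrr, rfl⟩
    refine ⟨fun i hi => ?_, ?_, ?_⟩
    · simp only [dotProduct_add, dotProduct_sub, dotProduct_smul, horth i hi, hr i,
        smul_zero, sub_zero, add_zero]
    · simp only [dotProduct_add, dotProduct_sub, dotProduct_smul, smul_eq_mul, hunit, hue, hr j]
      field_simp
      ring
    · rw [hnorm r hr, hrr]
      field_simp
      ring

end Knockoff

theorem stmt_4_general (n p : ℕ) (X : Matrix (Fin n) (Fin p) ℝ)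
    (hcols : ∀ j, Xᵀ j ⬝ᵥ Xᵀ j = 1)
    (j : Fin p)
    (px : Fin n → ℝ)
    (hpx_mem : px ∈ Submodule.span ℝ ((fun i : Fin p => Xᵀ i) '' {i : Fin p | i ≠ j}))
    (hpx_orth : ∀ i, i ≠ j → Xᵀ i ⬝ᵥ (Xᵀ j - px) = 0)
    (σj2 : ℝ) (hσj2 : σj2 = (Xᵀ j - px) ⬝ᵥ (Xᵀ j - px)) (hσpos : 0 < σj2)
    (sj : ℝ)
    (xt : Fin n → ℝ) :
    ((∀ i, i ≠ j → Xᵀ i ⬝ᵥ xt = Xᵀ i ⬝ᵥ Xᵀ j) ∧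
        Xᵀ j ⬝ᵥ xt = 1 - sj ∧ xt ⬝ᵥ xt = 1)
      ↔ (sj ≤ 2 * σj2 ∧ ∃ r : Fin n → ℝ,
          Xᵀ.mulVec r = 0 ∧ r ⬝ᵥ r = 2 * sj - sj ^ 2 / σj2 ∧
          xt = (sj / σj2) • px + (1 - sj / σj2) • (Xᵀ j) + r) := by
  have hform : (sj / σj2) • px + (1 - sj / σj2) • Xᵀ j = Xᵀ j - (sj / σj2) • (Xᵀ j - px) := by
    module
  have hmulVec : ∀ r, Xᵀ *ᵥ r = 0 ↔ ∀ i, Xᵀ i ⬝ᵥ r = 0 := fun r => funext_iff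
  simp only [hform, hmulVec]
  exact knockoff_conditions_iff hpx_mem hpx_orth (hcols j) hσj2 hσpos sj xt

/-- Proposition 2.2: characterization of the one-at-a-time knockoff for
column `j`.  Here `px = P_{\j} x_j` is the orthogonal projection of `x_j` onto the column
space of `X_{\j}` (characterized by membership in the span of the other columns and
orthogonality of the residual `x_j - px` to the other columns), and
`σj2 = ‖x_j - px‖² > 0`.  A vector `x̃_j` satisfies the knockoff conditions
(i) `X_{\j}ᵀx̃_j = X_{\j}ᵀx_j`, (ii) `x_jᵀx̃_j = 1 - s_j`, (iii) `x̃_jᵀx̃_j = 1`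
if and only if `s_j ∈ [0, 2σ_j²]` and
`x̃_j = (s_j/σ_j²) P_{\j}x_j + (1 - s_j/σ_j²) x_j + r_j` for some `r_j` with
`Xᵀ r_j = 0` and `‖r_j‖² = 2 s_j - s_j²/σ_j²`. -/
theorem stmt_4 (n p : ℕ) (X : Matrix (Fin n) (Fin p) ℝ)
    (hrank : X.rank = p)
    (hcols : ∀ j, Xᵀ j ⬝ᵥ Xᵀ j = 1)
    (j : Fin p)
    (px : Fin n → ℝ)
    (hpx_mem : px ∈ Submodule.span ℝ ((fun i : Fin p => Xᵀ i) '' {i : Fin p | i ≠ j}))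
    (hpx_orth : ∀ i, i ≠ j → Xᵀ i ⬝ᵥ (Xᵀ j - px) = 0)
    (σj2 : ℝ) (hσj2 : σj2 = (Xᵀ j - px) ⬝ᵥ (Xᵀ j - px)) (hσpos : 0 < σj2)
    (sj : ℝ) (hsj : 0 ≤ sj)
    (xt : Fin n → ℝ) :
    ((∀ i, i ≠ j → Xᵀ i ⬝ᵥ xt = Xᵀ i ⬝ᵥ Xᵀ j) ∧
        Xᵀ j ⬝ᵥ xt = 1 - sj ∧ xt ⬝ᵥ xt = 1)
      ↔ (sj ≤ 2 * σj2 ∧ ∃ r : Fin n → ℝ,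
          Xᵀ.mulVec r = 0 ∧ r ⬝ᵥ r = 2 * sj - sj ^ 2 / σj2 ∧
          xt = (sj / σj2) • px + (1 - sj / σj2) • (Xᵀ j) + r) :=
  stmt_4_general n p X hcols j px hpx_mem hpx_orth σj2 hσj2 hσpos sj xt
end

section
/- Let X ∈ ℝ^{n×p} be full rank with unit-norm columns, λ > 0, Σ_λ = XᵀX + λI_p, β̂_λ = Σ_λ^{-1}Xᵀy, β̂_OLS = (XᵀX)^{-1}Xᵀy, and let the j-th knockoff be x̃_j = (s_j/σ_j²)P_{\j}x_j + (1 − s_j/σ_j²)x_j + r_j with Xᵀr_j = 0 and s_j ∈ [0, 2σ_j²]. Then the j-th knockoff coefficient β̃_{λ,j} = β̂_{λ,j} + [Σ_λ^{-1}]_{jj}(x̃_jᵀy − x_jᵀy) satisfies β̃_{λ,j} = β̂_{λ,j} − [Σ_λ^{-1}]_{jj} s_j β̂_{OLS,j} + [Σ_λ^{-1}]_{jj} r_jᵀy. -/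
open Matrix

noncomputable section

/-- OLS estimator `β̂_OLS = (XᵀX)⁻¹ Xᵀ y`. -/
def betaOLS {n p : ℕ} (X : Matrix (Fin n) (Fin p) ℝ) (y : Fin n → ℝ) : Fin p → ℝ :=
  ((Xᵀ * X)⁻¹ * Xᵀ).mulVec y

/-- fast computation of the knockoff coefficient, Equation (14):
with the knockoff `x̃_j = (s_j/σ_j²) P_{\j}x_j + (1 - s_j/σ_j²) x_j + r_j`, `Xᵀr_j = 0`,
and `s_j ∈ [0, 2σ_j²]`, the `j`-th knockoff coefficient
`β̃_{λ,j} = β̂_{λ,j} + [Σ_λ⁻¹]_{jj}(x̃_jᵀy - x_jᵀy)` satisfies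
`β̃_{λ,j} = β̂_{λ,j} - [Σ_λ⁻¹]_{jj} s_j β̂_{OLS,j} + [Σ_λ⁻¹]_{jj} r_jᵀy`. -/
theorem stmt_5 (n p : ℕ) (X : Matrix (Fin n) (Fin p) ℝ)
    (hrank : X.rank = p)
    (hcols : ∀ j, Xᵀ j ⬝ᵥ Xᵀ j = 1)
    (y : Fin n → ℝ) (j : Fin p)
    (px : Fin n → ℝ)
    (hpx_mem : px ∈ Submodule.span ℝ ((fun i : Fin p => Xᵀ i) '' {i : Fin p | i ≠ j}))
    (hpx_orth : ∀ i, i ≠ j → Xᵀ i ⬝ᵥ (Xᵀ j - px) = 0)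
    (σj2 : ℝ) (hσj2 : σj2 = (Xᵀ j - px) ⬝ᵥ (Xᵀ j - px)) (hσpos : 0 < σj2)
    (l : ℝ) (hl : 0 < l)
    (sj : ℝ) (hsj0 : 0 ≤ sj) (hsj2 : sj ≤ 2 * σj2)
    (r : Fin n → ℝ) (hr : Xᵀ.mulVec r = 0)
    (xt : Fin n → ℝ)
    (hxt : xt = (sj / σj2) • px + (1 - sj / σj2) • (Xᵀ j) + r) :
    betaHat X l y j + (SigL X l)⁻¹ j j * (xt ⬝ᵥ y - Xᵀ j ⬝ᵥ y)
      = betaHat X l y j - (SigL X l)⁻¹ j j * sj * betaOLS X y j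
        + (SigL X l)⁻¹ j j * (r ⬝ᵥ y) := by
  -- invertibility of the Gram matrix
  have hr2 : (Xᵀ * X).rank = p := by rw [X.rank_transpose_mul_self, hrank]
  have hrange : LinearMap.range (Xᵀ * X).mulVecLin = ⊤ := by
    apply Submodule.eq_top_of_finrank_eq
    simpa [Matrix.rank] using hr2
  have hsurj : Function.Surjective (Xᵀ * X).mulVec := by
    intro w
    obtain ⟨v, hv⟩ := (LinearMap.range_eq_top.mp hrange) w
    exact ⟨v, hv⟩
  have hunit : IsUnit (Xᵀ * X) := Matrix.mulVec_surjective_iff_isUnit.mp hsurj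
  have hdet : IsUnit (Xᵀ * X).det := (Matrix.isUnit_iff_isUnit_det _).mp hunit
  have hGinv : (Xᵀ * X) * (Xᵀ * X)⁻¹ = 1 := Matrix.mul_nonsing_inv _ hdet
  set b : Fin p → ℝ := betaOLS X y with hb
  have hnorm : (Xᵀ * X).mulVec b = Xᵀ.mulVec y := by
    rw [hb, betaOLS, Matrix.mulVec_mulVec, ← Matrix.mul_assoc, hGinv, Matrix.one_mul]
  set e : Fin n → ℝ := y - X.mulVec b with he
  have hXe : Xᵀ.mulVec e = 0 := by
    rw [he, Matrix.mulVec_sub, Matrix.mulVec_mulVec, hnorm, sub_self]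
  have hcole : ∀ i, Xᵀ i ⬝ᵥ e = 0 := fun i => congrFun hXe i
  set v : Fin n → ℝ := Xᵀ j - px with hv
  have hpxe : px ⬝ᵥ e = 0 := by
    refine Submodule.span_induction (p := fun w _ => w ⬝ᵥ e = 0) ?_ ?_ ?_ ?_ hpx_mem
    · rintro w ⟨i, hi, rfl⟩; exact hcole i
    · simp
    · intro a c _ _ ha hc; rw [add_dotProduct, ha, hc, add_zero]
    · intro c a _ ha; rw [smul_dotProduct, ha, smul_zero]
  have hpxv : px ⬝ᵥ v = 0 := by
    refine Submodule.span_induction (p := fun w _ => w ⬝ᵥ v = 0) ?_ ?_ ?_ ?_ hpx_mem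
    · rintro w ⟨i, hi, rfl⟩; exact hpx_orth i hi
    · simp
    · intro a c _ _ ha hc; rw [add_dotProduct, ha, hc, add_zero]
    · intro c a _ ha; rw [smul_dotProduct, ha, smul_zero]
  have hxjv : Xᵀ j ⬝ᵥ v = σj2 := by
    have h1 : Xᵀ j ⬝ᵥ v - px ⬝ᵥ v = v ⬝ᵥ v := by rw [← sub_dotProduct, ← hv]
    linarith [hσj2, hpxv, h1]
  have hvXrow : v ᵥ* X = Pi.single j σj2 := by
    funext i
    have h0 : (v ᵥ* X) i = Xᵀ i ⬝ᵥ v := by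
      simp [Matrix.vecMul, dotProduct, Matrix.transpose_apply, mul_comm]
    by_cases hij : i = j
    · subst hij
      rw [h0, hxjv, Pi.single_eq_same]
    · rw [h0, Pi.single_eq_of_ne hij]
      exact hpx_orth i hij
  have hvy : v ⬝ᵥ y = σj2 * b j := by
    have hye : y = X.mulVec b + e := by rw [he]; abel
    rw [hye, dotProduct_add, Matrix.dotProduct_mulVec, hvXrow]
    have hve : v ⬝ᵥ e = 0 := by rw [hv, sub_dotProduct, hcole j, hpxe, sub_zero]
    rw [hve, add_zero, single_dotProduct]
  have hvy' : Xᵀ j ⬝ᵥ y - px ⬝ᵥ y = σj2 * b j := by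
    rw [← sub_dotProduct, ← hv, hvy]
  have hσne : σj2 ≠ 0 := ne_of_gt hσpos
  have hxty : xt ⬝ᵥ y = (sj / σj2) * (px ⬝ᵥ y) + (1 - sj / σj2) * (Xᵀ j ⬝ᵥ y) + r ⬝ᵥ y := by
    rw [hxt, add_dotProduct, add_dotProduct, smul_dotProduct, smul_dotProduct]
    simp [smul_eq_mul]
  rw [hxty]
  have key : (sj / σj2) * (px ⬝ᵥ y) + (1 - sj / σj2) * (Xᵀ j ⬝ᵥ y) + r ⬝ᵥ y - Xᵀ j ⬝ᵥ y
      = -(sj * b j) + r ⬝ᵥ y := by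
    field_simp
    linear_combination (-sj) * hvy'
  rw [key]; ring
end
end

section
/- Let X = [x_1,…,x_p] ∈ ℝ^{n×p} be full rank with unit-norm columns, suppose n ≥ p + M, fix j, and let s_j ∈ [0, (M+1)σ_j²/M]. Let R ∈ ℝ^{n×M} have orthonormal columns orthogonal to the column space of X, and let C ∈ ℝ^{M×M} satisfy CᵀC = s_j I_M + s_j(1 − s_j/σ_j²)e_M e_Mᵀ (such C exists since the right-hand side is positive semidefinite). Then the multiple knockoff matrix X̃^{(j)} = [(s_j/σ_j²)P_{\j}x_j + (1 − s_j/σ_j²)x_j]e_Mᵀ + RC, whose columns are x̃_j^{(1)},…,x̃_j^{(M)}, satisfies for every m ∈ {1,…,M}: (i) x_iᵀx̃_j^{(m)} = x_iᵀx_j for all i ≠ j; (ii) x_jᵀx̃_j^{(m)} = 1 − s_j; (iii) (x̃_j^{(m)})ᵀx̃_j^{(m)} = 1; and (iv) (x̃_j^{(m)})ᵀx̃_j^{(ℓ)} = 1 − s_j for all ℓ ≠ m. -/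
/-!
Write `r = x_j - P_{\j}x_j`, so that `‖r‖² = σ_j²`, `r ⊥ x_i` for `i ≠ j`, and
`x_jᵀr = σ_j²` because `P_{\j}x_j ⊥ r`. The mean of every knockoff column is
`x_j - (s_j/σ_j²) r`, and the columns of `RC` are orthogonal to `x_j`, to `r` and to every
`x_i`, while their Gram matrix is `CᵀC` because `RᵀR = I`. All four identities are then
bilinear expansions: the mean contributes `1 - 2s_j + s_j²/σ_j²` to every entry of the Gram
matrix of `X̃^{(j)}`, and `CᵀC` adds the missing `s_j - s_j²/σ_j²`, plus `s_j` on the diagonal.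
-/

open Matrix

namespace Matrix

variable {ι κ μ R : Type*} [Fintype ι] [Fintype κ]

theorem dotProduct_eq_zero_of_mem_span [CommSemiring R] {S : Set (ι → R)} {z w : ι → R}
    (hS : ∀ v ∈ S, v ⬝ᵥ z = 0) (hw : w ∈ Submodule.span R S) : w ⬝ᵥ z = 0 := by
  induction hw using Submodule.span_induction with
  | mem v hv => exact hS v hv
  | zero => exact zero_dotProduct z
  | add x y _ _ hx hy => rw [add_dotProduct, hx, hy, add_zero]
  | smul c x _ hx => rw [smul_dotProduct, hx, smul_zero]

theorem row_dotProduct_mulVec_eq_zero_of_mul_eq_zero [CommSemiring R]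
    {A : Matrix μ ι R} {B : Matrix ι κ R} (h : A * B = 0) (i : μ) (c : κ → R) :
    A i ⬝ᵥ (B *ᵥ c) = 0 := by
  change (A *ᵥ (B *ᵥ c)) i = 0
  rw [mulVec_mulVec, h, zero_mulVec, Pi.zero_apply]

theorem mulVec_dotProduct_mulVec_of_transpose_mul_self_eq_one [CommSemiring R]
    [DecidableEq κ] {B : Matrix ι κ R} (h : Bᵀ * B = 1) (c c' : κ → R) :
    (B *ᵥ c) ⬝ᵥ (B *ᵥ c') = c ⬝ᵥ c' := by
  rw [dotProduct_mulVec, ← vecMul_transpose, vecMul_vecMul, h, vecMul_one]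

theorem sub_smul_add_dotProduct_sub_smul_add [CommRing R] {v r c c' : ι → R} (a : R)
    (hvc : v ⬝ᵥ c = 0) (hvc' : v ⬝ᵥ c' = 0) (hrc : r ⬝ᵥ c = 0) (hrc' : r ⬝ᵥ c' = 0) :
    (v - a • r + c) ⬝ᵥ (v - a • r + c') =
      v ⬝ᵥ v - 2 * a * (v ⬝ᵥ r) + a ^ 2 * (r ⬝ᵥ r) + c ⬝ᵥ c' := by
  simp only [add_dotProduct, dotProduct_add, sub_dotProduct, dotProduct_sub, smul_dotProduct,
    dotProduct_smul, dotProduct_comm c v, dotProduct_comm c r, dotProduct_comm r v, hvc, hvc',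
    hrc, hrc', smul_eq_mul]
  ring

end Matrix

theorem stmt_8_general (n p M : ℕ)
    (X : Matrix (Fin n) (Fin p) ℝ)
    (hcols : ∀ j, Xᵀ j ⬝ᵥ Xᵀ j = 1)
    (j : Fin p)
    (px : Fin n → ℝ)
    (hpx_mem : px ∈ Submodule.span ℝ ((fun i : Fin p => Xᵀ i) '' {i : Fin p | i ≠ j}))
    (hpx_orth : ∀ i, i ≠ j → Xᵀ i ⬝ᵥ (Xᵀ j - px) = 0)
    (σj2 : ℝ) (hσj2 : σj2 = (Xᵀ j - px) ⬝ᵥ (Xᵀ j - px)) (hσpos : 0 < σj2)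
    (sj : ℝ)
    (R : Matrix (Fin n) (Fin M) ℝ)
    (hR1 : Rᵀ * R = 1) (hR2 : Xᵀ * R = 0)
    (C : Matrix (Fin M) (Fin M) ℝ)
    (hC : Cᵀ * C = sj • (1 : Matrix (Fin M) (Fin M) ℝ)
        + (sj * (1 - sj / σj2)) • Matrix.of (fun _ _ => (1 : ℝ)))
    (Xt : Matrix (Fin n) (Fin M) ℝ)
    (hXt : ∀ i m, Xt i m = (sj / σj2) * px i + (1 - sj / σj2) * Xᵀ j i + (R * C) i m) :
    ∀ m : Fin M,
      (∀ i : Fin p, i ≠ j → Xᵀ i ⬝ᵥ Xtᵀ m = Xᵀ i ⬝ᵥ Xᵀ j) ∧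
      Xᵀ j ⬝ᵥ Xtᵀ m = 1 - sj ∧
      Xtᵀ m ⬝ᵥ Xtᵀ m = 1 ∧
      ∀ l : Fin M, l ≠ m → Xtᵀ m ⬝ᵥ Xtᵀ l = 1 - sj := by
  set r := Xᵀ j - px
  have hpx_perp {z : Fin n → ℝ} (hz : ∀ i ≠ j, Xᵀ i ⬝ᵥ z = 0) : px ⬝ᵥ z = 0 :=
    dotProduct_eq_zero_of_mem_span (by rintro _ ⟨i, hi, rfl⟩; exact hz i hi) hpx_mem
  have hxj_r : Xᵀ j ⬝ᵥ r = σj2 := by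
    rw [hσj2, sub_dotProduct, hpx_perp hpx_orth, sub_zero]
  have hX_RC := row_dotProduct_mulVec_eq_zero_of_mul_eq_zero hR2
  have hr_RC (c : Fin M → ℝ) : r ⬝ᵥ (R *ᵥ c) = 0 := by
    rw [sub_dotProduct, hX_RC, hpx_perp fun i _ => hX_RC i c, sub_zero]
  have hcol (m : Fin M) : Xtᵀ m = Xᵀ j - (sj / σj2) • r + R *ᵥ Cᵀ m := by
    ext i
    rw [transpose_apply, hXt, show (R * C) i m = (R *ᵥ Cᵀ m) i from rfl]
    simp only [Pi.add_apply, Pi.sub_apply, Pi.smul_apply, smul_eq_mul, transpose_apply, r]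
    ring
  have hgram (m l : Fin M) : Xtᵀ m ⬝ᵥ Xtᵀ l = 1 - sj + if m = l then sj else 0 := by
    have hCC : Cᵀ m ⬝ᵥ Cᵀ l = sj * (if m = l then 1 else 0) + sj * (1 - sj / σj2) := by
      rw [show Cᵀ m ⬝ᵥ Cᵀ l = (Cᵀ * C) m l from rfl, hC]
      simp [one_apply]
    rw [hcol, hcol, sub_smul_add_dotProduct_sub_smul_add _ (hX_RC j _) (hX_RC j _) (hr_RC _)
      (hr_RC _), mulVec_dotProduct_mulVec_of_transpose_mul_self_eq_one hR1, hCC, hcols j,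
      hxj_r, ← hσj2]
    field_simp
    split_ifs <;> ring
  intro m
  refine ⟨fun i hi => ?_, ?_, by simpa using hgram m m,
    fun l hl => by simpa [hl.symm] using hgram m l⟩
  · rw [hcol, dotProduct_add, dotProduct_sub, dotProduct_smul, hpx_orth i hi, hX_RC, smul_zero,
      sub_zero, add_zero]
  · rw [hcol, dotProduct_add, dotProduct_sub, dotProduct_smul, hcols j, hxj_r, hX_RC,
      smul_eq_mul, div_mul_cancel₀ _ hσpos.ne', add_zero]

/-- Lemma 2.1, construction of multiple knockoffs: with
`px = P_{\j}x_j`, `σj2 = ‖x_j - px‖²`, `s_j ∈ [0, (M+1)σ_j²/M]`, `R` an `n × M` matrix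
with orthonormal columns orthogonal to the column space of `X`, and `C` with
`CᵀC = s_j I_M + s_j(1 - s_j/σ_j²) e_M e_Mᵀ`, the multiple knockoff matrix
`X̃^{(j)} = [(s_j/σ_j²)P_{\j}x_j + (1 - s_j/σ_j²)x_j] e_Mᵀ + RC` satisfies, for every `m`:
(i) `x_iᵀx̃_j^{(m)} = x_iᵀx_j` for `i ≠ j`; (ii) `x_jᵀx̃_j^{(m)} = 1 - s_j`;
(iii) `(x̃_j^{(m)})ᵀx̃_j^{(m)} = 1`; (iv) `(x̃_j^{(m)})ᵀx̃_j^{(ℓ)} = 1 - s_j` for `ℓ ≠ m`. -/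
theorem stmt_8 (n p M : ℕ) (hM : 1 ≤ M) (hnpM : p + M ≤ n)
    (X : Matrix (Fin n) (Fin p) ℝ)
    (hrank : X.rank = p)
    (hcols : ∀ j, Xᵀ j ⬝ᵥ Xᵀ j = 1)
    (j : Fin p)
    (px : Fin n → ℝ)
    (hpx_mem : px ∈ Submodule.span ℝ ((fun i : Fin p => Xᵀ i) '' {i : Fin p | i ≠ j}))
    (hpx_orth : ∀ i, i ≠ j → Xᵀ i ⬝ᵥ (Xᵀ j - px) = 0)
    (σj2 : ℝ) (hσj2 : σj2 = (Xᵀ j - px) ⬝ᵥ (Xᵀ j - px)) (hσpos : 0 < σj2)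
    (sj : ℝ) (hsj0 : 0 ≤ sj) (hsj1 : sj ≤ ((M : ℝ) + 1) * σj2 / M)
    (R : Matrix (Fin n) (Fin M) ℝ)
    (hR1 : Rᵀ * R = 1) (hR2 : Xᵀ * R = 0)
    (C : Matrix (Fin M) (Fin M) ℝ)
    (hC : Cᵀ * C = sj • (1 : Matrix (Fin M) (Fin M) ℝ)
        + (sj * (1 - sj / σj2)) • Matrix.of (fun _ _ => (1 : ℝ)))
    (Xt : Matrix (Fin n) (Fin M) ℝ)
    (hXt : ∀ i m, Xt i m = (sj / σj2) * px i + (1 - sj / σj2) * Xᵀ j i + (R * C) i m) :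
    ∀ m : Fin M,
      (∀ i : Fin p, i ≠ j → Xᵀ i ⬝ᵥ Xtᵀ m = Xᵀ i ⬝ᵥ Xᵀ j) ∧
      Xᵀ j ⬝ᵥ Xtᵀ m = 1 - sj ∧
      Xtᵀ m ⬝ᵥ Xtᵀ m = 1 ∧
      ∀ l : Fin M, l ≠ m → Xtᵀ m ⬝ᵥ Xtᵀ l = 1 - sj :=
  stmt_8_general n p M X hcols j px hpx_mem hpx_orth σj2 hσj2 hσpos sj R hR1 hR2 C hC Xt hXt
end

section
/- In the fixed-design Gaussian linear model y = Xβ + z, let j be a null feature (β_j = 0) and let x̃_j^{(1)},…,x̃_j^{(M)} be multiple knockoff copies of x_j satisfying the multiple-knockoff correlation conditions with parameter s_j. Write x̃_j^{(0)} = x_j. Then for every permutation π of {0,1,…,M}, the random vector (yᵀX_{\j}, yᵀx̃_j^{(0)}, yᵀx̃_j^{(1)}, …, yᵀx̃_j^{(M)}) has the same distribution as (yᵀX_{\j}, yᵀx̃_j^{(π(0))}, yᵀx̃_j^{(π(1))}, …, yᵀx̃_j^{(π(M))}); in particular, the OLS coefficient vector (β̂_j^{(0)}, β̂_j^{(1)},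 …, β̂_j^{(M)}) is exchangeable, where β̂_j^{(m)} is the coefficient of x̃_j^{(m)} from regressing y onto [X_{\j}, x̃_j^{(m)}]. -/
/-!
Write `y = Xβ + z`. The statistics `y ⬝ᵥ xᵢ` (`i ≠ j`) and `y ⬝ᵥ x̃⁽ᵐ⁾` form an affine image of
the Gaussian vector `z`; by characteristic functions, its law depends only on the Gram matrix of
the vectors involved and on the mean `Xβ ⬝ᵥ ·` of each statistic. The knockoff conditions make that
Gram matrix invariant under permuting the copies `x̃⁽⁰⁾ = xⱼ, …, x̃⁽ᴹ⁾`, and `βⱼ = 0` does the same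
for the means. Replacing `xⱼ` by `x̃⁽ᵐ⁾` does not change `XᵀX`, so each OLS coefficient
`β̂⁽ᵐ⁾` is one fixed linear function of `(y ⬝ᵥ xᵢ)_{i ≠ j}` and `y ⬝ᵥ x̃⁽ᵐ⁾`, and exchangeability
passes to the coefficients.
-/

open MeasureTheory ProbabilityTheory Matrix
open scoped NNReal

open Complex in
theorem integral_cexp_dotProduct_pi_gaussianReal {ι : Type*} [Fintype ι] (σ2 : ℝ≥0)
    (w : ι → ℝ) :
    ∫ x, cexp ((w ⬝ᵥ x : ℝ) * I) ∂(Measure.pi fun _ : ι => gaussianReal 0 σ2)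
      = cexp (-(σ2 * (w ⬝ᵥ w) : ℝ) / 2) := by
  have := integral_fintype_prod_eq_prod (μ := fun _ : ι => gaussianReal 0 σ2)
    (fun i t => cexp ((w i * t : ℝ) * I))
  simp_rw [← Complex.exp_sum, ← Finset.sum_mul, ← ofReal_sum] at this
  simp only [dotProduct]
  rw [this]
  simp_rw [ofReal_mul, ← charFun_apply_real, charFun_gaussianReal, ← Complex.exp_sum]
  simp [Finset.mul_sum, Finset.sum_div, neg_div, sq]

theorem StrongDual.apply_eq_dotProduct {κ : Type*} [Fintype κ] [DecidableEq κ]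
    (L : StrongDual ℝ (κ → ℝ)) (y : κ → ℝ) :
    L y = (fun a => L (Pi.single a 1)) ⬝ᵥ y := by
  conv_lhs => rw [pi_eq_sum_univ' y, map_sum]
  simp [dotProduct, mul_comm]

theorem charFunDual_map_mulVec_pi_gaussianReal {ι κ : Type*} [Fintype ι] [Fintype κ]
    [DecidableEq κ] (σ2 : ℝ≥0) (A : Matrix κ ι ℝ) (L : StrongDual ℝ (κ → ℝ)) :
    charFunDual ((Measure.pi fun _ : ι => gaussianReal 0 σ2).map (A *ᵥ ·)) L
      = Complex.exp (-(σ2 * ((fun a => L (Pi.single a 1)) ⬝ᵥ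
          (A * Aᵀ) *ᵥ fun a => L (Pi.single a 1)) : ℝ) / 2) := by
  set c : κ → ℝ := fun a => L (Pi.single a 1)
  have hL : ∀ x, L (A *ᵥ x) = (c ᵥ* A) ⬝ᵥ x := fun x => by
    rw [StrongDual.apply_eq_dotProduct L, dotProduct_mulVec]
  rw [charFunDual_apply, integral_map (by fun_prop) (by fun_prop)]
  simp_rw [hL]
  rw [integral_cexp_dotProduct_pi_gaussianReal, dotProduct_mulVec c, ← vecMul_vecMul,
    vecMul_transpose, dotProduct_comm (A *ᵥ _), dotProduct_mulVec]

theorem map_mulVec_pi_gaussianReal_eq {ι κ : Type*} [Fintype ι] [Fintype κ] (σ2 : ℝ≥0)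
    {A B : Matrix κ ι ℝ} (h : A * Aᵀ = B * Bᵀ) :
    (Measure.pi fun _ : ι => gaussianReal 0 σ2).map (A *ᵥ ·)
      = (Measure.pi fun _ : ι => gaussianReal 0 σ2).map (B *ᵥ ·) := by
  classical
  have := Measure.isProbabilityMeasure_map
    (μ := Measure.pi fun _ : ι => gaussianReal 0 σ2) (f := (A *ᵥ ·)) (by fun_prop)
  have := Measure.isProbabilityMeasure_map
    (μ := Measure.pi fun _ : ι => gaussianReal 0 σ2) (f := (B *ᵥ ·)) (by fun_prop)
  refine Measure.ext_of_charFunDual (funext fun L => ?_)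
  rw [charFunDual_map_mulVec_pi_gaussianReal, charFunDual_map_mulVec_pi_gaussianReal, h]

theorem map_comp_dotProduct_eq_of_gram_eq {Ω ι κ γ : Type*} [MeasurableSpace Ω]
    [MeasurableSpace γ] [Fintype ι] [Fintype κ] {P : Measure Ω} {z : Ω → ι → ℝ} {σ2 : ℝ≥0}
    (hz : Measurable z) (hlaw : P.map z = Measure.pi fun _ => gaussianReal 0 σ2) (b : ι → ℝ)
    {u u' : Matrix κ ι ℝ} (hgram : ∀ a a', u a ⬝ᵥ u a' = u' a ⬝ᵥ u' a')
    (hmean : ∀ a, b ⬝ᵥ u a = b ⬝ᵥ u' a) {Φ : (κ → ℝ) → γ} (hΦ : Measurable Φ) :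
    P.map (fun ω => Φ fun a => (b + z ω) ⬝ᵥ u a)
      = P.map (fun ω => Φ fun a => (b + z ω) ⬝ᵥ u' a) := by
  have hrepr : ∀ v : Matrix κ ι ℝ, P.map (fun ω => Φ fun a => (b + z ω) ⬝ᵥ v a)
      = ((Measure.pi fun _ => gaussianReal 0 σ2).map (v *ᵥ ·)).map
          (Φ ∘ ((fun a => b ⬝ᵥ v a) + ·)) := fun v => by
    rw [← hlaw, Measure.map_map (by fun_prop) hz, Measure.map_map (by fun_prop) (by fun_prop)]
    congr 1
    ext ω
    simp only [Function.comp_apply]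
    congr 1
    ext a
    simp [add_dotProduct, mulVec, dotProduct_comm (z ω)]
  have hgram' : u * uᵀ = u' * u'ᵀ := by
    ext a a'
    exact hgram a a'
  rw [hrepr, hrepr, map_mulVec_pi_gaussianReal_eq σ2 hgram', funext hmean]

theorem transpose_updateCol_apply {m n R : Type*} [DecidableEq n]
    (X : Matrix m n R) (j : n) (c : m → R) (k : n) :
    (X.updateCol j c)ᵀ k = if k = j then c else Xᵀ k := by
  ext i; rcases eq_or_ne k j with rfl | hk <;> simp [*]

theorem transpose_mul_self_updateCol {m n R : Type*} [Fintype m] [DecidableEq n] [CommSemiring R]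
    (X : Matrix m n R) (j : n) (c : m → R)
    (hc : ∀ i, i ≠ j → Xᵀ i ⬝ᵥ c = Xᵀ i ⬝ᵥ Xᵀ j) (hcc : c ⬝ᵥ c = Xᵀ j ⬝ᵥ Xᵀ j) :
    (X.updateCol j c)ᵀ * X.updateCol j c = Xᵀ * X := by
  ext k l
  change (X.updateCol j c)ᵀ k ⬝ᵥ (X.updateCol j c)ᵀ l = Xᵀ k ⬝ᵥ Xᵀ l
  rw [transpose_updateCol_apply, transpose_updateCol_apply]
  by_cases hk : k = j <;> by_cases hl : l = j
  · simp [hk, hl, hcc]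
  · rw [if_pos hk, if_neg hl, hk, dotProduct_comm, hc l hl, dotProduct_comm]
  · rw [if_neg hk, if_pos hl, hl, hc k hk]
  · rw [if_neg hk, if_neg hl]

/-- The least-squares fit against `X` with column `j` replaced by `c` sees `y` only through
`y ⬝ᵥ c` and the `y ⬝ᵥ Xᵀ i`, `i ≠ j`. -/
theorem leastSquares_updateCol {m n R : Type*} [Fintype m] [Fintype n] [DecidableEq n]
    [CommRing R] (X : Matrix m n R) (j : n) (c : m → R)
    (hc : ∀ i, i ≠ j → Xᵀ i ⬝ᵥ c = Xᵀ i ⬝ᵥ Xᵀ j) (hcc : c ⬝ᵥ c = Xᵀ j ⬝ᵥ Xᵀ j) (y : m → R) :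
    (((X.updateCol j c)ᵀ * X.updateCol j c)⁻¹ * (X.updateCol j c)ᵀ) *ᵥ y
      = (Xᵀ * X)⁻¹ *ᵥ (Equiv.funSplitAt j R).symm (y ⬝ᵥ c, fun i => y ⬝ᵥ Xᵀ i) := by
  rw [transpose_mul_self_updateCol X j c hc hcc, ← mulVec_mulVec, ← updateRow_transpose,
    updateRow_mulVec]
  congr 1
  ext k
  rcases eq_or_ne k j with rfl | hk
  · simp [dotProduct_comm]
  · simp [hk, mulVec, dotProduct_comm y]
    rfl

theorem sumElim_comp_perm_dotProduct {ι κ μ : Type*} [Fintype ι] {w : κ → ι → ℝ}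
    {v : μ → ι → ℝ} (π : Equiv.Perm μ) (hcross : ∀ i m l, w i ⬝ᵥ v m = w i ⬝ᵥ v l)
    (hgram : ∀ m l, v (π m) ⬝ᵥ v (π l) = v m ⬝ᵥ v l) (a a' : κ ⊕ μ) :
    Sum.elim w (v ∘ π) a ⬝ᵥ Sum.elim w (v ∘ π) a' = Sum.elim w v a ⬝ᵥ Sum.elim w v a' := by
  rcases a with i | m <;> rcases a' with i' | l
  · rfl
  · exact hcross i _ _
  · simp only [Sum.elim_inl, Sum.elim_inr, Function.comp_apply, dotProduct_comm _ (w i')]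
    exact hcross i' _ _
  · exact hgram m l

theorem mulVec_dotProduct_eq_of_apply_eq_zero {m n : Type*} [Fintype m] [Fintype n]
    (X : Matrix m n ℝ) {β : n → ℝ} {j : n} (hβ : β j = 0) {c c' : m → ℝ}
    (h : ∀ i, i ≠ j → Xᵀ i ⬝ᵥ c = Xᵀ i ⬝ᵥ c') :
    (X *ᵥ β) ⬝ᵥ c = (X *ᵥ β) ⬝ᵥ c' := by
  have hexp : ∀ v, (X *ᵥ β) ⬝ᵥ v = ∑ i, (Xᵀ i ⬝ᵥ v) * β i := fun v => by
    rw [dotProduct_comm, dotProduct_mulVec, ← mulVec_transpose]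
    rfl
  rw [hexp, hexp]
  refine Finset.sum_congr rfl fun i _ => ?_
  rcases eq_or_ne i j with rfl | hi
  · simp [hβ]
  · rw [h i hi]

theorem cons_dotProduct_cons {n M : ℕ} {x : Fin n → ℝ} {xt : Fin M → Fin n → ℝ} {s : ℝ}
    (hx : x ⬝ᵥ x = 1) (hxt : ∀ m, x ⬝ᵥ xt m = 1 - s) (hnorm : ∀ m, xt m ⬝ᵥ xt m = 1)
    (hpair : ∀ m l, l ≠ m → xt m ⬝ᵥ xt l = 1 - s) (m l : Fin (M + 1)) :
    (Fin.cons x xt : Fin (M + 1) → Fin n → ℝ) m ⬝ᵥ (Fin.cons x xt : Fin (M + 1) → Fin n → ℝ) l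
      = if m = l then 1 else 1 - s := by
  induction m using Fin.cases <;> induction l using Fin.cases
  · simp [hx]
  · simp [hxt, (Fin.succ_ne_zero _).symm]
  · simp [dotProduct_comm _ x, hxt]
  · rename_i m l
    rcases eq_or_ne l m with rfl | hlm
    · simp [hnorm]
    · simp [hpair m l hlm, hlm.symm]

theorem dotProduct_cons {n M : ℕ} {x v : Fin n → ℝ} {xt : Fin M → Fin n → ℝ}
    (h : ∀ m, v ⬝ᵥ xt m = v ⬝ᵥ x) (m : Fin (M + 1)) :
    v ⬝ᵥ (Fin.cons x xt : Fin (M + 1) → Fin n → ℝ) m = v ⬝ᵥ x := by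
  induction m using Fin.cases
  · rfl
  · simp [h]

theorem stmt_9_general
    {Ω : Type} [MeasurableSpace Ω] (P : Measure Ω) [IsProbabilityMeasure P]
    (n p M : ℕ)
    (X : Matrix (Fin n) (Fin p) ℝ)
    (hcols : ∀ j, Xᵀ j ⬝ᵥ Xᵀ j = 1)
    (β : Fin p → ℝ) (σ2 : ℝ≥0)
    (z : Ω → Fin n → ℝ)
    (hzmeas : ∀ i, Measurable fun ω => z ω i)
    (hzdist : ∀ i, P.map (fun ω => z ω i) = gaussianReal 0 σ2)
    (hzindep : iIndepFun (fun i ω => z ω i) P)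
    (y : Ω → Fin n → ℝ) (hy : ∀ ω, y ω = X.mulVec β + z ω)
    (j : Fin p) (hnull : β j = 0)
    (sj : ℝ)
    (xt : Fin M → Fin n → ℝ)
    (hkn : ∀ m : Fin M,
      (∀ i, i ≠ j → Xᵀ i ⬝ᵥ xt m = Xᵀ i ⬝ᵥ Xᵀ j) ∧
      Xᵀ j ⬝ᵥ xt m = 1 - sj ∧
      xt m ⬝ᵥ xt m = 1 ∧
      ∀ l : Fin M, l ≠ m → xt m ⬝ᵥ xt l = 1 - sj)
    (xe : Fin (M + 1) → Fin n → ℝ) (hxe : xe = Fin.cons (Xᵀ j) xt)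
    (bhat : Fin (M + 1) → Ω → ℝ)
    (hbhat : ∀ m ω, bhat m ω =
      ((((X.updateCol j (xe m))ᵀ * X.updateCol j (xe m))⁻¹
          * (X.updateCol j (xe m))ᵀ).mulVec (y ω)) j) :
    ∀ π : Equiv.Perm (Fin (M + 1)),
      (P.map (fun ω =>
          ((fun i : {i : Fin p // i ≠ j} => y ω ⬝ᵥ Xᵀ (i : Fin p)),
            fun m : Fin (M + 1) => y ω ⬝ᵥ xe m))
        = P.map (fun ω =>
          ((fun i : {i : Fin p // i ≠ j} => y ω ⬝ᵥ Xᵀ (i : Fin p)),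
            fun m : Fin (M + 1) => y ω ⬝ᵥ xe (π m)))) ∧
      P.map (fun ω => fun m : Fin (M + 1) => bhat m ω)
        = P.map (fun ω => fun m : Fin (M + 1) => bhat (π m) ω) := by
  intro π
  obtain rfl : y = fun ω => X *ᵥ β + z ω := funext hy
  have hgram_xe : ∀ m l, xe m ⬝ᵥ xe l = if m = l then 1 else 1 - sj := hxe ▸
    cons_dotProduct_cons (hcols j) (fun m => (hkn m).2.1) (fun m => (hkn m).2.2.1)
      (fun m => (hkn m).2.2.2)
  have hcross : ∀ i, i ≠ j → ∀ m, Xᵀ i ⬝ᵥ xe m = Xᵀ i ⬝ᵥ Xᵀ j := fun i hi => hxe ▸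
    dotProduct_cons (fun m => (hkn m).1 i hi)
  have hlaw : P.map z = Measure.pi fun _ => gaussianReal 0 σ2 := by
    rw [← funext hzdist]
    exact hzindep.map_fun_eq_pi_map fun i => (hzmeas i).aemeasurable
  let S := {i : Fin p // i ≠ j}
  let e := MeasurableEquiv.sumPiEquivProdPi fun _ : S ⊕ Fin (M + 1) => ℝ
  have hgram := sumElim_comp_perm_dotProduct (w := fun i : S => Xᵀ i) π
    (fun i m l => (hcross i i.2 m).trans (hcross i i.2 l).symm)
    (fun m l => by simp only [hgram_xe, π.injective.eq_iff])
  have hmean : ∀ a, (X *ᵥ β) ⬝ᵥ Sum.elim (fun i : S => Xᵀ i) (xe ∘ π) a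
      = (X *ᵥ β) ⬝ᵥ Sum.elim (fun i : S => Xᵀ i) xe a := by
    rintro (i | m)
    · rfl
    · exact mulVec_dotProduct_eq_of_apply_eq_zero X hnull fun i hi =>
        (hcross i hi _).trans (hcross i hi m).symm
  have hlaw_stat := fun {γ : Type} [MeasurableSpace γ] {Φ : _ → γ} (hΦ : Measurable Φ) =>
    map_comp_dotProduct_eq_of_gram_eq (measurable_pi_iff.mpr hzmeas) hlaw _ hgram hmean hΦ
  refine ⟨(hlaw_stat e.measurable).symm, ?_⟩
  let H (q : (S → ℝ) × (Fin (M + 1) → ℝ)) (m : Fin (M + 1)) : ℝ :=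
    ((Xᵀ * X)⁻¹ *ᵥ (Equiv.funSplitAt j ℝ).symm (q.2 m, q.1)) j
  have hH : Measurable H := by
    have : Continuous (Equiv.funSplitAt j ℝ).symm := (Homeomorph.funSplitAt ℝ j).symm.continuous
    exact measurable_pi_lambda _ fun m => Continuous.measurable (by fun_prop)
  have hbhat_eq : ∀ m ω,
      bhat m ω = H (e fun a => (X *ᵥ β + z ω) ⬝ᵥ Sum.elim (fun i : S => Xᵀ i) xe a) m := by
    intro m ω
    rw [hbhat, leastSquares_updateCol X j (xe m) (fun i hi => hcross i hi m)
      (by rw [hgram_xe, if_pos rfl, hcols])]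
    rfl
  simp only [hbhat_eq]
  exact (hlaw_stat (hH.comp e.measurable)).symm

/-- permutation invariance for multiple knockoffs of a null feature:
in the fixed-design Gaussian linear model `y = Xβ + z`, if `β_j = 0` and
`x̃_j^{(1)}, …, x̃_j^{(M)}` are multiple knockoff copies of `x_j` satisfying the
multiple-knockoff correlation conditions, then writing `x̃_j^{(0)} = x_j`, for every
permutation `π` of `{0, 1, …, M}` the vector
`(yᵀX_{\j}, yᵀx̃_j^{(0)}, …, yᵀx̃_j^{(M)})` has the same distribution as
`(yᵀX_{\j}, yᵀx̃_j^{(π(0))}, …, yᵀx̃_j^{(π(M))})`; in particular the OLS coefficients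
`(β̂_j^{(0)}, …, β̂_j^{(M)})` — where `β̂_j^{(m)}` is the coefficient of `x̃_j^{(m)}` from
regressing `y` onto `X` with its `j`-th column replaced by `x̃_j^{(m)}` — are exchangeable. -/
theorem stmt_9
    {Ω : Type} [MeasurableSpace Ω] (P : Measure Ω) [IsProbabilityMeasure P]
    (n p M : ℕ)
    (X : Matrix (Fin n) (Fin p) ℝ) (hrank : X.rank = p)
    (hcols : ∀ j, Xᵀ j ⬝ᵥ Xᵀ j = 1)
    (β : Fin p → ℝ) (σ2 : ℝ≥0)
    (z : Ω → Fin n → ℝ)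
    (hzmeas : ∀ i, Measurable fun ω => z ω i)
    (hzdist : ∀ i, P.map (fun ω => z ω i) = gaussianReal 0 σ2)
    (hzindep : iIndepFun (fun i ω => z ω i) P)
    (y : Ω → Fin n → ℝ) (hy : ∀ ω, y ω = X.mulVec β + z ω)
    (j : Fin p) (hnull : β j = 0)
    (sj : ℝ)
    (xt : Fin M → Fin n → ℝ)
    (hkn : ∀ m : Fin M,
      (∀ i, i ≠ j → Xᵀ i ⬝ᵥ xt m = Xᵀ i ⬝ᵥ Xᵀ j) ∧
      Xᵀ j ⬝ᵥ xt m = 1 - sj ∧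
      xt m ⬝ᵥ xt m = 1 ∧
      ∀ l : Fin M, l ≠ m → xt m ⬝ᵥ xt l = 1 - sj)
    (xe : Fin (M + 1) → Fin n → ℝ) (hxe : xe = Fin.cons (Xᵀ j) xt)
    (bhat : Fin (M + 1) → Ω → ℝ)
    (hbhat : ∀ m ω, bhat m ω =
      ((((X.updateCol j (xe m))ᵀ * X.updateCol j (xe m))⁻¹
          * (X.updateCol j (xe m))ᵀ).mulVec (y ω)) j) :
    ∀ π : Equiv.Perm (Fin (M + 1)),
      (P.map (fun ω =>
          ((fun i : {i : Fin p // i ≠ j} => y ω ⬝ᵥ Xᵀ (i : Fin p)),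
            fun m : Fin (M + 1) => y ω ⬝ᵥ xe m))
        = P.map (fun ω =>
          ((fun i : {i : Fin p // i ≠ j} => y ω ⬝ᵥ Xᵀ (i : Fin p)),
            fun m : Fin (M + 1) => y ω ⬝ᵥ xe (π m)))) ∧
      P.map (fun ω => fun m : Fin (M + 1) => bhat m ω)
        = P.map (fun ω => fun m : Fin (M + 1) => bhat (π m) ω) :=
  stmt_9_general P n p M X hcols β σ2 z hzmeas hzdist hzindep y hy j hnull sj xt hkn xe hxe bhat
    hbhat
end
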